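/- arXiv:1402.6961 — 5 statements merged into one kernel-verified Lean document; each statement's English description precedes it below -/
import Mathlib

section
/- For every positive integer n, the sum over k ≥ 0 of C(n-k, k) · (n/(n-k)) · 2^k equals 2^n + (-1)^n. (Here the sum ranges over k with 0 ≤ k ≤ ⌊n/2⌋, so that n - k > 0 and the binomial coefficient is nonzero, except that for k = 0 the term is 1·2^0·n/n = 1.) -/
/-!
Write `J n = ∑ₖ C(n - k, k) 2ᵏ`. Since `n/(n-k) · C(n-k, k) = C(n-k, k) + C(n-k-1, k-1)`,
the sum equals `J n + 2 J (n - 2)` for `n ≥ 2`. Pascal's rule gives `J (n+2) = J (n+1) + 2 J n`,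
whence `3 J n = 2^(n+1) + (-1)^n`, and the two closed forms add up to `2^n + (-1)^n`.
-/

open Finset

section Jacobsthal

variable {R : Type*} [CommSemiring R] (x : R)

/-- The Jacobsthal polynomial `J_{n+1}(x)`, evaluated at `x`. -/
def jacobsthal (n : ℕ) : R := ∑ p ∈ antidiagonal n, (p.1.choose p.2 : R) * x ^ p.2

theorem jacobsthal_add_two (n : ℕ) :
    jacobsthal x (n + 2) = jacobsthal x (n + 1) + x * jacobsthal x n := by
  simp only [jacobsthal]
  rw [Nat.antidiagonal_succ_succ', Nat.antidiagonal_succ']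
  simp [Nat.choose_succ_succ, sum_add_distrib, mul_sum, pow_succ, add_mul, mul_left_comm x,
    mul_comm _ x, add_left_comm, add_comm]

theorem jacobsthal_eq_sum_range (n : ℕ) :
    jacobsthal x n = ∑ k ∈ range (n + 1), ((n - k).choose k : R) * x ^ k := by
  rw [jacobsthal, ← Nat.sum_antidiagonal_swap]
  exact Nat.sum_antidiagonal_eq_sum_range_succ (fun k l => (l.choose k : R) * x ^ k) n

theorem jacobsthal_eq_sum_range_of_lt {n m : ℕ} (hm : n / 2 < m) :
    jacobsthal x n = ∑ k ∈ range m, ((n - k).choose k : R) * x ^ k := by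
  have truncate : ∀ m, n / 2 < m → ∑ k ∈ range m, ((n - k).choose k : R) * x ^ k =
      ∑ k ∈ range (n / 2 + 1), ((n - k).choose k : R) * x ^ k := fun m hm =>
    (sum_subset (range_subset_range.2 hm) fun k hk hk' => by
      simp only [mem_range] at hk hk'
      rw [Nat.choose_eq_zero_of_lt (by omega), Nat.cast_zero, zero_mul]).symm
  rw [jacobsthal_eq_sum_range, truncate _ (by omega), truncate _ hm]

end Jacobsthal

theorem three_mul_jacobsthal_two {R : Type*} [CommRing R] (n : ℕ) :
    3 * jacobsthal (2 : R) n = 2 ^ (n + 1) + (-1) ^ n := by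
  induction n using Nat.twoStepInduction with
  | zero => simp [jacobsthal]; norm_num
  | one => simp [jacobsthal, Nat.antidiagonal_succ]; norm_num
  | more n ih₀ ih₁ =>
    rw [jacobsthal_add_two]
    linear_combination ih₁ + 2 * ih₀

theorem cast_div_mul_choose_succ_succ {K : Type*} [Field K] [CharZero K] (m k : ℕ) :
    ((m + k + 2 : ℕ) : K) / ((m + 1 : ℕ) : K) * (m + 1).choose (k + 1) =
      (m + 1).choose (k + 1) + m.choose k := by
  have h : ((m + 1 : ℕ) : K) * m.choose k = (m + 1).choose (k + 1) * (k + 1 : ℕ) := by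
    exact_mod_cast Nat.add_one_mul_choose_eq m k
  rw [div_mul_eq_mul_div, div_eq_iff (Nat.cast_ne_zero.2 m.succ_ne_zero)]
  push_cast at h ⊢
  linear_combination -h

theorem lucas_weight_sum (n : ℕ) (hn : 0 < n) :
    ∑ k ∈ Finset.range (n / 2 + 1),
      (n : ℚ) / ((n - k : ℕ) : ℚ) * ((n - k).choose k) * 2 ^ k
      = 2 ^ n + (-1) ^ n := by
  obtain _ | _ | m := n
  · omega
  · norm_num
  have split_term : ∀ k ∈ range ((m + 2) / 2),
      ((m + 2 : ℕ) : ℚ) / ((m + 2 - (k + 1) : ℕ) : ℚ) * (m + 2 - (k + 1)).choose (k + 1)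
        * 2 ^ (k + 1) =
      (m + 2 - (k + 1)).choose (k + 1) * 2 ^ (k + 1) + 2 * ((m - k).choose k * 2 ^ k) := by
    intro k hk
    have hkm : k ≤ m := by rw [mem_range] at hk; omega
    obtain ⟨j, rfl⟩ := Nat.exists_eq_add_of_le hkm
    rw [show k + j + 2 - (k + 1) = j + 1 by omega, show k + j - k = j by omega,
      show k + j + 2 = j + k + 2 by omega, cast_div_mul_choose_succ_succ]
    ring
  have hJ₂ := jacobsthal_eq_sum_range_of_lt (2 : ℚ) (show (m + 2) / 2 < (m + 2) / 2 + 1 by omega)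
  have hJ₀ := jacobsthal_eq_sum_range_of_lt (2 : ℚ) (show m / 2 < (m + 2) / 2 by omega)
  rw [sum_range_succ'] at hJ₂ ⊢
  rw [sum_congr rfl split_term, sum_add_distrib, ← mul_sum, ← hJ₀]
  have h₂ := three_mul_jacobsthal_two (R := ℚ) (m + 2)
  have h₀ := three_mul_jacobsthal_two (R := ℚ) m
  simp only [Nat.sub_zero, Nat.choose_zero_right, pow_zero] at hJ₂ ⊢
  field_simp
  linear_combination hJ₂.symm + h₂ / 3 + 2 * h₀ / 3
end

section
/- Let n ≥ 3 be odd and let V(Λ_n) ⊆ {0,1}^n be the set of binary strings with no two cyclically adjacent 1s. Let L be the set of vectors in {0,1,*}^n obtained as sums of pairwise non-cyclically-adjacent rows of the n×n circulant matrix circ(*,1,0,…,0) (where in the sum, rows have disjoint supports so each coordinate is 0, 1, or *), together with the all-0 vector. Each l ∈ L determines a box K(l) = K_1 × ⋯ × K_n ⊆ {0,1}^n with K_i = {0} if l_i = 0, K_i = {1} if l_i = 1, K_i = {0,1} if l_i = *. Then the boxes {K(l) : l ∈ L} together with {1}^n partition {0,1}^n, and V(Λ_n) is a selector of {K(l) :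 l ∈ L}: every v ∈ V(Λ_n) lies in exactly one box K(l) with l ∈ L, and every such box contains exactly one element of V(Λ_n). -/
/-!
Admissibility of `S` together with `v ∈ lucasBox S` is equivalent to the recurrence
`i ∈ S ↔ v (i + 1) ∧ i + 1 ∉ S`. If `v` has a zero, the recurrence is solved uniquely from
right to left: `i ∈ S` iff the run of ones of `v` starting at `i + 1` has odd length. If `v` is
all ones, it says that `S` alternates around the cycle `ZMod n`, which is impossible for odd `n`.
Conversely, a box `lucasBox S` contains exactly one string without adjacent ones, namely the
indicator of `S + 1`, since on the coordinates `i ∈ S` that string is forced to be `0`.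
-/

/-- The box in `{0,1}^n` determined by the code word obtained by summing
the rows of `circ(*,1,0,…,0)` indexed by `S`: coordinate `i` is `*` if `i ∈ S`,
`1` if `i - 1 ∈ S`, and `0` otherwise. -/
def lucasBox {n : ℕ} (S : Set (ZMod n)) : Set (ZMod n → Bool) :=
  {v | ∀ i : ZMod n, i ∉ S → (v i = true ↔ i - 1 ∈ S)}

namespace LucasCube

variable {n : ℕ} {v : ZMod n → Bool} {S : Set (ZMod n)}

def IsCode (v : ZMod n → Bool) (S : Set (ZMod n)) : Prop :=
  ∀ i : ZMod n, i ∈ S ↔ v (i + 1) = true ∧ i + 1 ∉ S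

lemma admissible_and_mem_lucasBox_iff_isCode :
    ((∀ i ∈ S, i + 1 ∉ S) ∧ v ∈ lucasBox S) ↔ IsCode v S := by
  constructor
  · rintro ⟨hAdm, hbox⟩ i
    have hbox' : i + 1 ∉ S → (v (i + 1) = true ↔ i ∈ S) := by
      simpa only [add_sub_cancel_right] using hbox (i + 1)
    exact ⟨fun hi => ⟨(hbox' (hAdm i hi)).mpr hi, hAdm i hi⟩, fun ⟨hv, hi⟩ => (hbox' hi).mp hv⟩
  · intro h
    refine ⟨fun i hi => ((h i).mp hi).2, fun i hi => ?_⟩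
    simpa only [sub_add_cancel, hi, not_false_eq_true, and_true] using (h (i - 1)).symm

lemma even_of_forall_add_one_mem_iff (hS : ∀ i : ZMod n, i + 1 ∈ S ↔ i ∉ S) : Even n := by
  have hk : ∀ k : ℕ, (k : ZMod n) ∈ S ↔ (Even k ↔ (0 : ZMod n) ∈ S) := by
    intro k
    induction k with
    | zero => simp
    | succ k ih =>
      rw [Nat.cast_succ, hS, ih, Nat.even_add_one]
      tauto
  by_contra hodd
  have := hk n
  rw [ZMod.natCast_self] at this
  tauto

lemma IsCode.not_forall_true (hodd : Odd n) (hS : IsCode v S) : ¬ ∀ i, v i = true := by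
  intro hall
  refine Nat.not_even_iff_odd.mpr hodd (even_of_forall_add_one_mem_iff (S := S) fun i => ?_)
  simp only [hS i, hall, true_and, not_not]

section OnesAfter

variable [NeZero n]

lemma exists_false_after (h : ∃ j, v j = false) (i : ZMod n) :
    ∃ m : ℕ, v (i + 1 + m) = false := by
  obtain ⟨j, hj⟩ := h
  exact ⟨(j - (i + 1)).val, by rwa [ZMod.natCast_zmod_val, add_sub_cancel]⟩

open Classical in
/-- The length of the run of ones of `v` starting at `i + 1`. -/
noncomputable def onesAfter (h : ∃ j, v j = false) (i : ZMod n) : ℕ :=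
  Nat.find (exists_false_after h i)

variable (h : ∃ j, v j = false)

lemma onesAfter_eq_zero_iff {i : ZMod n} : onesAfter h i = 0 ↔ v (i + 1) = false := by
  classical
  simp [onesAfter]

lemma onesAfter_eq_succ {i : ZMod n} (hv : v (i + 1) = true) :
    onesAfter h i = onesAfter h (i + 1) + 1 := by
  classical
  have hshift : ∀ m : ℕ, v (i + 1 + ((m + 1 : ℕ) : ZMod n)) = v (i + 1 + 1 + m) := by
    intro m
    push_cast
    ring_nf
  unfold onesAfter
  rw [Nat.find_comp_succ _ (by simpa only [hshift] using exists_false_after h (i + 1))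
    (by simpa using hv)]
  congr 1
  exact Nat.find_congr' (by simp only [hshift, implies_true])

lemma IsCode.mem_iff_odd_onesAfter (hS : IsCode v S) (i : ZMod n) :
    i ∈ S ↔ Odd (onesAfter h i) := by
  induction hk : onesAfter h i generalizing i with
  | zero =>
    rw [hS, (onesAfter_eq_zero_iff h).mp hk]
    simp
  | succ k ih =>
    have hv : v (i + 1) = true := by
      rw [← Bool.not_eq_false, ← onesAfter_eq_zero_iff h, hk]
      exact k.succ_ne_zero
    rw [onesAfter_eq_succ h hv, Nat.succ_inj] at hk
    rw [hS, ih (i + 1) hk, Nat.odd_add_one]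
    simp [hv]

lemma isCode_odd_onesAfter : IsCode v {i | Odd (onesAfter h i)} := by
  intro i
  cases hv : v (i + 1) with
  | false => simp [(onesAfter_eq_zero_iff h).mpr hv]
  | true => simp [onesAfter_eq_succ h hv, Nat.odd_add_one]

lemma existsUnique_isCode (h : ∃ j, v j = false) : ∃! S, IsCode v S :=
  ⟨_, isCode_odd_onesAfter h, fun _ hS => Set.ext (hS.mem_iff_odd_onesAfter h)⟩

end OnesAfter

lemma mem_lucasBox_iff_of_noAdjacent (hAdm : ∀ i ∈ S, i + 1 ∉ S)
    (hv : ∀ i, ¬(v i = true ∧ v (i + 1) = true)) (hbox : v ∈ lucasBox S) (i : ZMod n) :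
    v i = true ↔ i - 1 ∈ S := by
  by_cases hi : i ∈ S
  · have hprev : i - 1 ∉ S := fun h => hAdm _ h (by rwa [sub_add_cancel])
    have hnext : v (i + 1) = true := by
      simpa only [add_sub_cancel_right, hi, iff_true] using hbox (i + 1) (hAdm i hi)
    simpa [hprev] using fun hvi => hv i ⟨hvi, hnext⟩
  · exact hbox i hi

lemma existsUnique_noAdjacent_mem_lucasBox (hAdm : ∀ i ∈ S, i + 1 ∉ S) :
    ∃! v : ZMod n → Bool, (∀ i, ¬(v i = true ∧ v (i + 1) = true)) ∧ v ∈ lucasBox S := by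
  classical
  refine ⟨fun i => decide (i - 1 ∈ S), ⟨fun i ⟨h1, h2⟩ => ?_, fun i _ => by simp⟩, ?_⟩
  · simp only [decide_eq_true_eq, add_sub_cancel_right] at h1 h2
    exact hAdm _ h1 (by rwa [sub_add_cancel])
  · rintro w ⟨hw, hbox⟩
    funext i
    rw [Bool.eq_iff_iff, decide_eq_true_iff]
    exact mem_lucasBox_iff_of_noAdjacent hAdm hw hbox i

end LucasCube

open LucasCube in
theorem lucas_cube_selector_general (n : ℕ) (hodd : Odd n) [NeZero n] :
    -- vertices of the Lucas cube Λ_n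
    let V : Set (ZMod n → Bool) :=
      {v | ∀ i : ZMod n, ¬(v i = true ∧ v (i + 1) = true)}
    -- admissible index sets: pairwise non-cyclically-adjacent rows (∅ gives the all-0 word)
    let Adm : Set (Set (ZMod n)) := {S | ∀ i ∈ S, i + 1 ∉ S}
    -- the boxes together with {1}^n partition {0,1}^n
    ((∀ v : ZMod n → Bool,
        ((∀ i, v i = true) ∧ ∀ S ∈ Adm, v ∉ lucasBox S) ∨
        ((¬ ∀ i, v i = true) ∧ ∃! S, S ∈ Adm ∧ v ∈ lucasBox S))
    -- every vertex of Λ_n lies in exactly one box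
    ∧ (∀ v ∈ V, ∃! S, S ∈ Adm ∧ v ∈ lucasBox S)
    -- every box contains exactly one vertex of Λ_n
    ∧ (∀ S ∈ Adm, ∃! v, v ∈ V ∧ v ∈ lucasBox S)) := by
  intro V Adm
  have partition : ∀ v : ZMod n → Bool,
      ((∀ i, v i = true) ∧ ∀ S ∈ Adm, v ∉ lucasBox S) ∨
      ((¬ ∀ i, v i = true) ∧ ∃! S, S ∈ Adm ∧ v ∈ lucasBox S) := by
    intro v
    by_cases hall : ∀ i, v i = true
    · exact .inl ⟨hall, fun S hS hbox =>
        (admissible_and_mem_lucasBox_iff_isCode.mp ⟨hS, hbox⟩).not_forall_true hodd hall⟩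
    · have hzero : ∃ j, v j = false := by simpa using hall
      refine .inr ⟨hall, ?_⟩
      simpa only [Adm, Set.mem_ofPred_eq, admissible_and_mem_lucasBox_iff_isCode]
        using existsUnique_isCode hzero
  refine ⟨partition, fun v hv => ?_, fun S hS => existsUnique_noAdjacent_mem_lucasBox hS⟩
  rcases partition v with ⟨hall, -⟩ | ⟨-, h⟩
  · exact absurd ⟨hall 0, hall (0 + 1)⟩ (hv 0)
  · exact h

theorem lucas_cube_selector (n : ℕ) (hn : 3 ≤ n) (hodd : Odd n) [NeZero n] :
    -- vertices of the Lucas cube Λ_n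
    let V : Set (ZMod n → Bool) :=
      {v | ∀ i : ZMod n, ¬(v i = true ∧ v (i + 1) = true)}
    -- admissible index sets: pairwise non-cyclically-adjacent rows (∅ gives the all-0 word)
    let Adm : Set (Set (ZMod n)) := {S | ∀ i ∈ S, i + 1 ∉ S}
    -- the boxes together with {1}^n partition {0,1}^n
    ((∀ v : ZMod n → Bool,
        ((∀ i, v i = true) ∧ ∀ S ∈ Adm, v ∉ lucasBox S) ∨
        ((¬ ∀ i, v i = true) ∧ ∃! S, S ∈ Adm ∧ v ∈ lucasBox S))
    -- every vertex of Λ_n lies in exactly one box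
    ∧ (∀ v ∈ V, ∃! S, S ∈ Adm ∧ v ∈ lucasBox S)
    -- every box contains exactly one vertex of Λ_n
    ∧ (∀ S ∈ Adm, ∃! v, v ∈ V ∧ v ∈ lucasBox S)) :=
  lucas_cube_selector_general n hodd
end

section
/- Let n ≥ 3 be odd, let A = circ(1,2,0,…,0), and let U be the set of all sums of pairwise non-cyclically-adjacent rows of A. Then the boxes [0,2)^n ∩ ([0,2)^n + v - 1) for v ∈ U ∪ {(0,…,0), (2,…,2)} form a partition of [0,2)^n, i.e., they are pairwise disjoint and their union is [0,2)^n. -/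
/-!
Write `b i` for `1 ≤ x i`. The box of `v` contains `x` iff `v i = 0 → ¬ b i` and
`v i = 2 → b i` for all `i`. For the vector of an independent set `S` this says exactly that
`i ∈ S ↔ b (i + 1) ∧ i + 1 ∉ S` for all `i`, a recurrence running backwards around the
cycle.
If `b` fails somewhere, the recurrence has the unique solution "`i ∈ S` iff the run of `b`
starting at `i + 1` has odd length", and the all-`2` vector is excluded. If `b` holds everywhere,
the recurrence says that `S` alternates around a cycle of odd length, which is impossible, and
the all-`2` vector is the only candidate left.
-/

namespace LagariasShor

variable {n : ℕ}

theorem iff_add_natCast_iff_even {s : ZMod n → Prop} (hs : ∀ i, s i ↔ ¬ s (i + 1))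
    (k : ℕ) (i : ZMod n) : s i ↔ (s (i + k) ↔ Even k) := by
  induction k with
  | zero => simp
  | succ k ih =>
    rw [ih, Nat.even_add_one, hs (i + k), Nat.cast_succ, add_assoc]
    tauto

theorem not_forall_iff_not_succ_of_odd (hodd : Odd n) (s : ZMod n → Prop) :
    ¬ ∀ i, s i ↔ ¬ s (i + 1) := fun hs => by
  have h := iff_add_natCast_iff_even hs n 0
  rw [ZMod.natCast_self, add_zero] at h
  exact Nat.not_even_iff_odd.2 hodd (by tauto)

section RunLength

variable [NeZero n] {b : ZMod n → Prop}

theorem exists_not_add_one_add (hb : ∃ j, ¬ b j) (i : ZMod n) :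
    ∃ k : ℕ, ¬ b (i + 1 + k) := by
  obtain ⟨j, hj⟩ := hb
  exact ⟨(j - (i + 1)).val, by rwa [ZMod.natCast_zmod_val, add_sub_cancel]⟩

def runLength (b : ZMod n → Prop) [DecidablePred b] (hb : ∃ j, ¬ b j) (i : ZMod n) : ℕ :=
  Nat.find (exists_not_add_one_add hb i)

variable [DecidablePred b] (hb : ∃ j, ¬ b j)

theorem runLength_eq (i : ZMod n) :
    runLength b hb i = if b (i + 1) then runLength b hb (i + 1) + 1 else 0 := by
  unfold runLength
  split_ifs with h
  · have shift (k : ℕ) : i + 1 + ((k + 1 : ℕ) : ZMod n) = i + 1 + 1 + k := by push_cast; ring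
    have h' : ∃ k : ℕ, ¬ b (i + 1 + (k + 1 : ℕ)) := by
      simpa only [shift] using exists_not_add_one_add hb (i + 1)
    rw [Nat.find_comp_succ _ h' (by simpa using h)]
    congr 1
    exact Nat.find_congr' (by simp only [shift, implies_true])
  · exact Nat.find_eq_zero _ |>.2 (by simpa using h)

theorem odd_runLength_iff (i : ZMod n) :
    Odd (runLength b hb i) ↔ b (i + 1) ∧ ¬ Odd (runLength b hb (i + 1)) := by
  rw [runLength_eq hb i]
  split_ifs with h <;> simp [h, Nat.odd_add_one]

theorem iff_odd_runLength {s : ZMod n → Prop} (hs : ∀ i, s i ↔ b (i + 1) ∧ ¬ s (i + 1))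
    (i : ZMod n) : s i ↔ Odd (runLength b hb i) := by
  induction hk : runLength b hb i generalizing i with
  | zero =>
    have h := runLength_eq hb i
    split_ifs at h with hbi
    · omega
    · simp [hs i, hbi]
  | succ k ih =>
    have h := runLength_eq hb i
    split_ifs at h with hbi
    · rw [hs, ih (i + 1) (by omega), Nat.odd_add_one]
      tauto
    · omega

end RunLength

theorem existsUnique_finset_iff_and_not_mem [NeZero n] {b : ZMod n → Prop} (hb : ∃ j, ¬ b j) :
    ∃! S : Finset (ZMod n), ∀ i, i ∈ S ↔ b (i + 1) ∧ i + 1 ∉ S := by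
  classical
  refine ⟨Finset.univ.filter fun i => Odd (runLength b hb i), ?_, fun S hS => ?_⟩
  · simpa using odd_runLength_iff hb
  · ext i
    simpa using iff_odd_runLength hb hS i

/-- The sum of the rows `r_i`, `i ∈ S`, of `circ(1, 2, 0, …, 0)` when no two indices of `S` are
cyclically adjacent. -/
def rowSum (S : Finset (ZMod n)) : ZMod n → ℤ :=
  fun i => if i ∈ S then 1 else if i - 1 ∈ S then 2 else 0

theorem mem_Ico_ite_iff {t : ℝ} (ht : t ∈ Set.Ico (0 : ℝ) 2) (p q : Prop) [Decidable p]
    [Decidable q] :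
    t ∈ Set.Ico (((if q then 1 else if p then 2 else 0 : ℤ) : ℝ) - 1)
        (((if q then 1 else if p then 2 else 0 : ℤ) : ℝ) - 1 + 2) ↔
      (¬ q → (p ↔ 1 ≤ t)) := by
  obtain ⟨h0, h2⟩ := ht
  by_cases hq : q <;> by_cases hp : p <;> simp [hq, hp] <;> grind

theorem independent_and_mem_box_iff {x : ZMod n → ℝ} (hx : ∀ i, x i ∈ Set.Ico (0 : ℝ) 2)
    (S : Finset (ZMod n)) :
    ((∀ i ∈ S, i + 1 ∉ S) ∧
        ∀ i, x i ∈ Set.Ico ((rowSum S i : ℝ) - 1) ((rowSum S i : ℝ) - 1 + 2)) ↔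
      ∀ i, i ∈ S ↔ 1 ≤ x (i + 1) ∧ i + 1 ∉ S := by
  simp only [rowSum, mem_Ico_ite_iff (hx _)]
  constructor
  · rintro ⟨hS, hbox⟩ i
    have h := hbox (i + 1)
    rw [add_sub_cancel_right] at h
    have := hS i
    tauto
  · intro h
    refine ⟨fun i hi => ((h i).1 hi).2, fun i => ?_⟩
    have := h (i - 1)
    rw [sub_add_cancel] at this
    tauto

end LagariasShor

open LagariasShor in
theorem lagarias_shor_partition_general (n : ℕ) (hodd : Odd n) [NeZero n] :
    ∀ x : ZMod n → ℝ, (∀ i, x i ∈ Set.Ico (0 : ℝ) 2) →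
      ∃! v : ZMod n → ℤ,
        ((∃ S : Finset (ZMod n), (∀ i ∈ S, i + 1 ∉ S) ∧
            v = fun i => if i ∈ S then 1 else if i - 1 ∈ S then 2 else 0)
          ∨ v = fun _ => 2)
        ∧ ∀ i, x i ∈ Set.Ico ((v i : ℝ) - 1) ((v i : ℝ) - 1 + 2) := by
  intro x hx
  by_cases hall : ∀ i, 1 ≤ x i
  · refine ⟨fun _ => 2, ⟨Or.inr rfl, fun i => ?_⟩, ?_⟩
    · constructor <;> push_cast <;> linarith [hall i, (hx i).2]
    rintro v ⟨⟨S, hS, rfl⟩ | rfl, hbox⟩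
    · refine absurd (fun i => ?_) (not_forall_iff_not_succ_of_odd hodd (· ∈ S))
      simpa [hall] using (independent_and_mem_box_iff hx S).1 ⟨hS, hbox⟩ i
    · rfl
  · push Not at hall
    obtain ⟨j, hj⟩ := hall
    obtain ⟨S, hS, hS_unique⟩ :=
      existsUnique_finset_iff_and_not_mem (b := fun i => 1 ≤ x i) ⟨j, not_le.2 hj⟩
    obtain ⟨hS_indep, hS_box⟩ := (independent_and_mem_box_iff hx S).2 hS
    refine ⟨rowSum S, ⟨Or.inl ⟨S, hS_indep, rfl⟩, hS_box⟩, ?_⟩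
    rintro v ⟨⟨S', hS', rfl⟩ | rfl, hbox⟩
    · rw [hS_unique S' ((independent_and_mem_box_iff hx S').1 ⟨hS', hbox⟩)]
      rfl
    · have := (hbox j).1
      push_cast at this
      linarith

theorem lagarias_shor_partition (n : ℕ) (hn : 3 ≤ n) (hodd : Odd n) [NeZero n] :
    ∀ x : ZMod n → ℝ, (∀ i, x i ∈ Set.Ico (0 : ℝ) 2) →
      ∃! v : ZMod n → ℤ,
        ((∃ S : Finset (ZMod n), (∀ i ∈ S, i + 1 ∉ S) ∧
            v = fun i => if i ∈ S then 1 else if i - 1 ∈ S then 2 else 0)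
          ∨ v = fun _ => 2)
        ∧ ∀ i, x i ∈ Set.Ico ((v i : ℝ) - 1) ((v i : ℝ) - 1 + 2) :=
  lagarias_shor_partition_general n hodd
end

section
/- Let n ≥ 3 be odd. For each position i ∈ Z/n and each k with 1 ≤ k ≤ ⌊n/2⌋, the number of k-element subsets S of Z/n with no two cyclically adjacent elements and i ∈ S equals C(n-k-1, k-1), and therefore Σ_{k=1}^{⌊n/2⌋} C(n-k-1, k-1)·2^k = (2^n - 2)/3. -/
/-!
Cutting the cycle `ZMod n` open at `i` identifies the independent `k`-sets through `i` with the
independent `(k - 1)`-sets of the path `i + 2, …, i - 2` on `n - 3` vertices, and these are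
counted by Pascal's rule. The weighted sum is `2 J (n - 2)` for the diagonal sum
`J m = ∑ C(m - q, q) 2^q` of Pascal's triangle, which satisfies `J (m + 2) = J (m + 1) + 2 J m`,
hence `3 J m = 2^(m + 1) + (-1)^m`.
-/

open Finset

def pathIndepSets (m j : ℕ) : Finset (Finset ℕ) :=
  ((range m).powersetCard j).filter fun T => ∀ t ∈ T, t + 1 ∉ T

theorem mem_pathIndepSets {m j : ℕ} {T : Finset ℕ} :
    T ∈ pathIndepSets m j ↔ T ⊆ range m ∧ T.card = j ∧ ∀ t ∈ T, t + 1 ∉ T := by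
  rw [pathIndepSets, mem_filter, mem_powersetCard, and_assoc]

theorem card_pathIndepSets_zero (m : ℕ) : #(pathIndepSets m 0) = 1 := by
  rw [pathIndepSets, powersetCard_zero, filter_singleton, if_pos (by simp), card_singleton]

theorem pathIndepSets_eq_empty {m j : ℕ} (h : m < j) : pathIndepSets m j = ∅ := by
  rw [pathIndepSets, powersetCard_eq_empty.2 (by rwa [card_range]), filter_empty]

theorem card_pathIndepSets_one_one : #(pathIndepSets 1 1) = 1 := by
  decide

theorem filter_notMem_pathIndepSets (m j : ℕ) :
    (pathIndepSets (m + 1) j).filter (m ∉ ·) = pathIndepSets m j := by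
  ext T
  simp only [mem_filter, mem_pathIndepSets, subset_iff, mem_range]
  constructor
  · rintro ⟨⟨hT, hcard, hindep⟩, hm⟩
    exact ⟨fun t ht => lt_of_le_of_ne (Nat.le_of_lt_succ (hT ht)) (by rintro rfl; exact hm ht),
      hcard, hindep⟩
  · rintro ⟨hT, hcard, hindep⟩
    exact ⟨⟨fun t ht => (hT ht).trans (Nat.lt_succ_self m), hcard, hindep⟩,
      fun hm => (hT hm).false⟩

theorem filter_mem_pathIndepSets (m j : ℕ) :
    (pathIndepSets (m + 2) (j + 1)).filter (m + 1 ∈ ·) =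
      (pathIndepSets m j).image (insert (m + 1)) := by
  ext T
  simp only [mem_filter, mem_image, mem_pathIndepSets, subset_iff, mem_range]
  constructor
  · rintro ⟨⟨hT, hcard, hindep⟩, hm⟩
    refine ⟨T.erase (m + 1), ⟨fun t ht => ?_, ?_, fun t ht h => ?_⟩, insert_erase hm⟩
    · rw [mem_erase] at ht
      have := hT ht.2
      have : t ≠ m := fun h => hindep t ht.2 (by rwa [h])
      omega
    · rw [card_erase_of_mem hm, hcard, Nat.add_sub_cancel]
    · exact hindep t (mem_of_mem_erase ht) (mem_of_mem_erase h)
  · rintro ⟨T, ⟨hT, hcard, hindep⟩, rfl⟩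
    have hm : m + 1 ∉ T := fun h => by have := hT h; omega
    refine ⟨⟨fun t ht => ?_, by rw [card_insert_of_notMem hm, hcard], fun t ht h => ?_⟩,
      mem_insert_self _ _⟩
    · rcases mem_insert.1 ht with rfl | ht
      · omega
      · have := hT ht; omega
    · rcases mem_insert.1 ht with rfl | ht <;> rcases mem_insert.1 h with h | h
      · omega
      · have := hT h; omega
      · have := hT ht; omega
      · exact hindep t ht h

theorem card_pathIndepSets_add_two (m j : ℕ) :
    #(pathIndepSets (m + 2) (j + 1)) = #(pathIndepSets (m + 1) (j + 1)) + #(pathIndepSets m j) := by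
  rw [← card_filter_add_card_filter_not (m + 1 ∈ ·), filter_notMem_pathIndepSets,
    filter_mem_pathIndepSets, card_image_of_injOn, add_comm]
  have not_mem {T} (hT : T ∈ pathIndepSets m j) : m + 1 ∉ T := fun h =>
    (mem_range.1 ((mem_pathIndepSets.1 hT).1 h)).not_gt (by omega)
  intro T hT T' hT' h
  rw [← erase_insert (not_mem hT), h, erase_insert (not_mem hT')]

theorem card_pathIndepSets (m j : ℕ) : #(pathIndepSets (m + j) j) = (m + 1).choose j := by
  induction j generalizing m with
  | zero => rw [card_pathIndepSets_zero, Nat.choose_zero_right]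
  | succ j ih =>
    induction m with
    | zero =>
      rcases j with _ | j
      · exact card_pathIndepSets_one_one
      · rw [zero_add, card_pathIndepSets_add_two, pathIndepSets_eq_empty (by omega),
          pathIndepSets_eq_empty (by omega)]
        rfl
    | succ m ihm =>
      rw [show m + 1 + (j + 1) = m + j + 2 by omega, card_pathIndepSets_add_two,
        Nat.choose_succ_succ, ← ihm, ← ih, show m + j + 1 = m + (j + 1) by omega, add_comm]

section PascalDiagonal

variable {R : Type*}

def pascalDiagSum [CommSemiring R] (x : R) (m : ℕ) : R :=
  ∑ p ∈ antidiagonal m, (p.1.choose p.2 : R) * x ^ p.2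

theorem pascalDiagSum_add_two [CommSemiring R] (x : R) (m : ℕ) :
    pascalDiagSum x (m + 2) = pascalDiagSum x (m + 1) + x * pascalDiagSum x m := by
  rw [pascalDiagSum, pascalDiagSum, pascalDiagSum, Nat.antidiagonal_succ_succ',
    Nat.antidiagonal_succ']
  simp only [sum_cons, sum_map, mul_sum, Function.Embedding.coe_prodMap, Prod.map_fst,
    Prod.map_snd, Function.Embedding.coeFn_mk, Function.Embedding.refl_apply, Nat.choose_succ_succ,
    Nat.choose_zero_succ, Nat.succ_eq_add_one, Nat.cast_zero, zero_mul, zero_add, add_assoc,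
    ← sum_add_distrib]
  congr 2 with p
  push_cast
  ring

theorem pascalDiagSum_eq_sum_range [CommSemiring R] (x : R) (m : ℕ) :
    pascalDiagSum x m = ∑ q ∈ range (m + 1), ((m - q).choose q : R) * x ^ q := by
  rw [pascalDiagSum, ← Nat.sum_antidiagonal_swap, Nat.sum_antidiagonal_eq_sum_range_succ_mk]
  rfl

theorem sum_Icc_choose_mul_pow_eq_mul_pascalDiagSum [CommSemiring R] (x : R) {n : ℕ}
    (hn : 2 ≤ n) :
    ∑ k ∈ Icc 1 (n / 2), ((n - k - 1).choose (k - 1) : R) * x ^ k =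
      x * pascalDiagSum x (n - 2) := by
  rw [pascalDiagSum_eq_sum_range, mul_sum, ← Ico_add_one_right_eq_Icc, sum_Ico_eq_sum_range,
    Nat.add_sub_cancel]
  refine sum_subset_zero_on_sdiff (range_subset_range.2 (by omega)) (fun q hq => ?_)
    (fun q hq => ?_)
  · rw [mem_sdiff, mem_range, mem_range] at hq
    rw [Nat.choose_eq_zero_of_lt (by omega), Nat.cast_zero, zero_mul, mul_zero]
  · rw [mem_range] at hq
    rw [show n - (1 + q) - 1 = n - 2 - q by omega, Nat.add_sub_cancel_left]
    ring

theorem three_mul_pascalDiagSum_two [CommRing R] (m : ℕ) :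
    3 * pascalDiagSum (2 : R) m = 2 ^ (m + 1) + (-1) ^ m := by
  induction m using Nat.twoStepInduction with
  | zero => norm_num [pascalDiagSum]
  | one => norm_num [pascalDiagSum, Nat.antidiagonal_succ]
  | more m h₀ h₁ =>
    rw [pascalDiagSum_add_two, mul_add, h₁, mul_left_comm, h₀]
    ring

end PascalDiagonal

theorem ZMod.eq_of_add_natCast_eq {n : ℕ} {i : ZMod n} {a b : ℕ} (ha : a < n) (hb : b < n)
    (h : i + a = i + b) : a = b := by
  rw [← ZMod.val_natCast_of_lt ha, ← ZMod.val_natCast_of_lt hb, add_left_cancel h]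

section Cycle

variable {n : ℕ} [NeZero n]

def cycleIndepSetsContaining (i : ZMod n) (k : ℕ) : Finset (Finset (ZMod n)) :=
  univ.powerset.filter fun S => S.card = k ∧ (∀ x ∈ S, x + 1 ∉ S) ∧ i ∈ S

theorem mem_cycleIndepSetsContaining {i : ZMod n} {k : ℕ} {S : Finset (ZMod n)} :
    S ∈ cycleIndepSetsContaining i k ↔
      S.card = k ∧ (∀ x ∈ S, x + 1 ∉ S) ∧ i ∈ S := by
  rw [cycleIndepSetsContaining, mem_filter, and_iff_right (mem_powerset.2 (subset_univ S))]

theorem ZMod.add_natCast_val_sub (i s : ZMod n) : i + ((s - i).val : ZMod n) = s := by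
  rw [ZMod.natCast_zmod_val, add_sub_cancel]

theorem two_le_val_sub_of_mem {i : ZMod n} {k : ℕ} {S : Finset (ZMod n)}
    (hS : S ∈ cycleIndepSetsContaining i k) {s : ZMod n} (hs : s ∈ S) (hsi : s ≠ i) :
    2 ≤ (s - i).val ∧ (s - i).val + 2 ≤ n := by
  obtain ⟨-, hindep, hi⟩ := mem_cycleIndepSetsContaining.1 hS
  have hs_eq := ZMod.add_natCast_val_sub i s
  have h0 : (s - i).val ≠ 0 := fun h => hsi (by rw [← hs_eq, h, Nat.cast_zero, add_zero])
  have h1 : (s - i).val ≠ 1 := fun h => hindep i hi (by rwa [← hs_eq, h, Nat.cast_one] at hs)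
  have hlast : (s - i).val + 1 ≠ n := fun h => hindep s hs <| by
    rwa [← hs_eq, add_assoc, ← Nat.cast_add_one, h, ZMod.natCast_self, add_zero]
  have := ZMod.val_lt (s - i)
  omega

def liftToCycle (i : ZMod n) (T : Finset ℕ) : Finset (ZMod n) :=
  insert i (T.image fun t => i + ((t + 2 : ℕ) : ZMod n))

def cutAt (i : ZMod n) (S : Finset (ZMod n)) : Finset ℕ :=
  (S.erase i).image fun s => (s - i).val - 2

theorem self_notMem_image_add_natCast (i : ZMod n) {T : Finset ℕ} (hT : ∀ t ∈ T, t + 2 < n) :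
    i ∉ T.image fun t => i + ((t + 2 : ℕ) : ZMod n) := by
  rw [mem_image]
  rintro ⟨t, ht, h⟩
  have := ZMod.eq_of_add_natCast_eq (b := 0) (hT t ht) (NeZero.pos n)
    (by rwa [Nat.cast_zero, add_zero])
  omega

theorem liftToCycle_mem (hn : 3 ≤ n) (i : ZMod n) {j : ℕ} {T : Finset ℕ}
    (hT : T ∈ pathIndepSets (n - 3) j) :
    liftToCycle i T ∈ cycleIndepSetsContaining i (j + 1) := by
  obtain ⟨hsub, hcard, hindep⟩ := mem_pathIndepSets.1 hT
  have hlt : ∀ t ∈ T, t + 3 < n := fun t ht => by have := mem_range.1 (hsub ht); omega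
  have succ_eq {a b : ℕ} (ha : a + 1 < n) (hb : b < n) (h : i + (a : ZMod n) + 1 = i + b) :
      b = a + 1 :=
    (ZMod.eq_of_add_natCast_eq ha hb (by rw [← h, Nat.cast_add_one, add_assoc])).symm
  have hi := self_notMem_image_add_natCast i fun t ht => (hlt t ht).trans' (by omega)
  refine mem_cycleIndepSetsContaining.2 ⟨?_, ?_, mem_insert_self _ _⟩
  · rw [liftToCycle, card_insert_of_notMem hi, card_image_of_injOn, hcard]
    intro t ht t' ht' h
    have := ZMod.eq_of_add_natCast_eq (hlt t ht |>.trans' (by omega))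
      (hlt t' ht' |>.trans' (by omega)) h
    omega
  · intro x hx hx1
    rw [liftToCycle, mem_insert, mem_image] at hx hx1
    rcases hx with rfl | ⟨t, ht, rfl⟩ <;> rcases hx1 with hx1 | ⟨t', ht', hx1⟩
    · have := succ_eq (a := 0) (b := 0) (by omega) (by omega)
        (by rw [Nat.cast_zero, add_zero, hx1])
      omega
    · have := succ_eq (a := 0) (b := t' + 2) (by omega) (by linarith [hlt t' ht'])
        (by rw [Nat.cast_zero, add_zero, hx1])
      omega
    · have := succ_eq (a := t + 2) (b := 0) (by linarith [hlt t ht]) (by omega)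
        (by rw [Nat.cast_zero, add_zero, hx1])
      omega
    · have := succ_eq (a := t + 2) (b := t' + 2) (by linarith [hlt t ht])
        (by linarith [hlt t' ht']) hx1.symm
      exact hindep t ht (by rwa [show t + 1 = t' by omega])

theorem cutAt_mem {i : ZMod n} {j : ℕ} {S : Finset (ZMod n)}
    (hS : S ∈ cycleIndepSetsContaining i (j + 1)) : cutAt i S ∈ pathIndepSets (n - 3) j := by
  obtain ⟨hcard, hindep, hi⟩ := mem_cycleIndepSetsContaining.1 hS
  have hoff {s} (hs : s ∈ S.erase i) :=
    two_le_val_sub_of_mem hS (mem_of_mem_erase hs) (ne_of_mem_erase hs)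
  refine mem_pathIndepSets.2 ⟨fun t ht => ?_, ?_, fun t ht ht1 => ?_⟩
  · obtain ⟨s, hs, rfl⟩ := mem_image.1 ht
    have := hoff hs
    exact mem_range.2 (by omega)
  · rw [cutAt, card_image_of_injOn, card_erase_of_mem hi, hcard, Nat.add_sub_cancel]
    intro s hs s' hs' h
    have := hoff hs
    have := hoff hs'
    rw [← ZMod.add_natCast_val_sub i s, ← ZMod.add_natCast_val_sub i s',
      show (s - i).val = (s' - i).val by simp only at h; omega]
  · obtain ⟨s, hs, rfl⟩ := mem_image.1 ht
    obtain ⟨s', hs', hss'⟩ := mem_image.1 ht1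
    have := hoff hs
    have := hoff hs'
    refine hindep s (mem_of_mem_erase hs) ?_
    rw [← ZMod.add_natCast_val_sub i s', show (s' - i).val = (s - i).val + 1 by omega,
      Nat.cast_add_one, ← add_assoc, ZMod.add_natCast_val_sub] at hs'
    exact mem_of_mem_erase hs'

theorem liftToCycle_cutAt {i : ZMod n} {k : ℕ} {S : Finset (ZMod n)}
    (hS : S ∈ cycleIndepSetsContaining i k) : liftToCycle i (cutAt i S) = S := by
  rw [liftToCycle, cutAt, image_image]
  conv_rhs =>
    rw [← insert_erase (mem_cycleIndepSetsContaining.1 hS).2.2, ← image_id (s := S.erase i)]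
  congr 1
  refine image_congr fun s hs => ?_
  have := two_le_val_sub_of_mem hS (mem_of_mem_erase hs) (ne_of_mem_erase hs)
  simp only [Function.comp_apply, id]
  rw [Nat.sub_add_cancel this.1, ZMod.add_natCast_val_sub]

theorem cutAt_liftToCycle (i : ZMod n) {T : Finset ℕ} (hT : ∀ t ∈ T, t + 2 < n) :
    cutAt i (liftToCycle i T) = T := by
  rw [cutAt, liftToCycle, erase_insert (self_notMem_image_add_natCast i hT), image_image]
  conv_rhs => rw [← image_id (s := T)]
  refine image_congr fun t ht => ?_
  simp only [Function.comp_apply, id, add_sub_cancel_left, ZMod.val_natCast_of_lt (hT t ht)]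
  omega

theorem card_cycleIndepSetsContaining (hn : 3 ≤ n) (i : ZMod n) (j : ℕ) :
    #(cycleIndepSetsContaining i (j + 1)) = #(pathIndepSets (n - 3) j) :=
  card_nbij' (cutAt i) (liftToCycle i) (fun _ hS => cutAt_mem hS)
    (fun _ hT => liftToCycle_mem hn i hT) (fun _ hS => liftToCycle_cutAt hS)
    fun T hT => cutAt_liftToCycle i fun t ht => by
      have := mem_range.1 ((mem_pathIndepSets.1 hT).1 ht)
      omega

end Cycle

theorem card_cyclic_indep_mem_and_sum (n : ℕ) (hn : 3 ≤ n) (hodd : Odd n) [NeZero n] :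
    (∀ i : ZMod n, ∀ k : ℕ, 1 ≤ k → k ≤ n / 2 →
      (Finset.univ.powerset.filter (fun S : Finset (ZMod n) =>
          S.card = k ∧ (∀ j ∈ S, j + 1 ∉ S) ∧ i ∈ S)).card
        = (n - k - 1).choose (k - 1))
    ∧ ∑ k ∈ Finset.Icc 1 (n / 2), ((n - k - 1).choose (k - 1) : ℚ) * 2 ^ k
        = (2 ^ n - 2) / 3 := by
  refine ⟨fun i k hk1 hk2 => ?_, ?_⟩
  · obtain ⟨j, rfl⟩ := Nat.exists_eq_add_of_le' hk1
    rw [show n - (j + 1) - 1 = n - 3 - j + 1 by omega, Nat.add_sub_cancel, ← card_pathIndepSets,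
      Nat.sub_add_cancel (by omega)]
    exact card_cycleIndepSetsContaining hn i j
  · obtain ⟨m, rfl⟩ : ∃ m, n = 2 * m + 3 :=
      ⟨n / 2 - 1, by have := Nat.odd_iff.1 hodd; omega⟩
    have h3 := three_mul_pascalDiagSum_two (R := ℚ) (2 * m + 1)
    rw [Odd.neg_one_pow ⟨m, rfl⟩] at h3
    rw [sum_Icc_choose_mul_pow_eq_mul_pascalDiagSum 2 (by omega), eq_div_iff three_ne_zero,
      show 2 * m + 3 - 2 = 2 * m + 1 by omega]
    linear_combination 2 * h3
end

section
/- For every even integer n ≥ 2: 3·Σ_{k=0}^{n/2} C(n-k, k)·2^k = 2^{n+1} + 1 and 3·Σ_{k=1}^{n/2} C(n-k-1, k-1)·2^k = 2^n + 2. -/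
/-!
The weighted diagonal sums `a n = ∑ₖ C(n-k, k) xᵏ` of Pascal's triangle satisfy the
Fibonacci-type recurrence `a (n+2) = a (n+1) + x a n` (Pascal's rule). For `x = 2` the
characteristic roots are `2` and `-1`, giving `3 a n = 2ⁿ⁺¹ + (-1)ⁿ`; the second sum is
`2 a (n-2)` after the shift `k ↦ k + 1`.
-/

open Finset

section

variable {R : Type*} [CommSemiring R] (x : R)

-- At `x = 1` these are the Fibonacci numbers, at `x = 2` the Jacobsthal numbers.
def diagonalChooseSum (n : ℕ) : R := ∑ p ∈ antidiagonal n, (p.1.choose p.2 : R) * x ^ p.2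

theorem diagonalChooseSum_add_two (n : ℕ) :
    diagonalChooseSum x (n + 2) = diagonalChooseSum x (n + 1) + x * diagonalChooseSum x n := by
  have h₂ : diagonalChooseSum x (n + 2)
      = 1 + ∑ p ∈ antidiagonal n, ((p.1 + 1).choose (p.2 + 1) : R) * x ^ (p.2 + 1) := by
    simp [diagonalChooseSum, Nat.antidiagonal_succ_succ']
  have h₁ : diagonalChooseSum x (n + 1)
      = 1 + ∑ p ∈ antidiagonal n, (p.1.choose (p.2 + 1) : R) * x ^ (p.2 + 1) := by
    simp [diagonalChooseSum, Nat.antidiagonal_succ']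
  rw [h₂, h₁, diagonalChooseSum, mul_sum, add_assoc, ← sum_add_distrib]
  congr 1
  refine sum_congr rfl fun p _ => ?_
  rw [Nat.choose_succ_succ, Nat.cast_add]
  ring

theorem diagonalChooseSum_eq_sum_range (n : ℕ) :
    diagonalChooseSum x n = ∑ k ∈ range (n + 1), ((n - k).choose k : R) * x ^ k := by
  rw [diagonalChooseSum, ← Nat.sum_antidiagonal_swap]
  exact Nat.sum_antidiagonal_eq_sum_range_succ (fun i j => (j.choose i : R) * x ^ i) n

theorem diagonalChooseSum_eq_sum_range_half (n : ℕ) :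
    diagonalChooseSum x n = ∑ k ∈ range (n / 2 + 1), ((n - k).choose k : R) * x ^ k := by
  rw [diagonalChooseSum_eq_sum_range]
  refine (sum_subset (range_subset_range.2 (by omega)) fun k _ hk => ?_).symm
  have hk : n - k < k := by simp only [mem_range, not_lt] at hk; omega
  rw [Nat.choose_eq_zero_of_lt hk, Nat.cast_zero, zero_mul]

theorem sum_Icc_choose_pred_eq_mul_diagonalChooseSum (n : ℕ) :
    ∑ k ∈ Icc 1 ((n + 2) / 2), ((n + 2 - k - 1).choose (k - 1) : R) * x ^ k
      = x * diagonalChooseSum x n := by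
  rw [diagonalChooseSum_eq_sum_range_half, mul_sum, show (n + 2) / 2 = n / 2 + 1 by omega,
    ← Ico_add_one_right_eq_Icc, sum_Ico_eq_sum_range]
  refine sum_congr rfl fun k _ => ?_
  rw [show n + 2 - (1 + k) - 1 = n - k by omega, show 1 + k - 1 = k by omega, pow_add, pow_one]
  ring

end

theorem three_mul_diagonalChooseSum_two (n : ℕ) :
    3 * diagonalChooseSum (2 : ℤ) n = 2 ^ (n + 1) + (-1) ^ n := by
  induction n using Nat.twoStepInduction with
  | zero => simp [diagonalChooseSum]
  | one => simp [diagonalChooseSum, Nat.antidiagonal_succ]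
  | more n ih₀ ih₁ =>
    rw [diagonalChooseSum_add_two]
    linear_combination ih₁ + 2 * ih₀

theorem sum_choose_two_pow_even (n : ℕ) (hn : 2 ≤ n) (heven : Even n) :
    (3 : ℤ) * (∑ k ∈ Finset.range (n / 2 + 1), ((n - k).choose k : ℤ) * 2 ^ k)
        = 2 ^ (n + 1) + 1
    ∧ (3 : ℤ) * (∑ k ∈ Finset.Icc 1 (n / 2), ((n - k - 1).choose (k - 1) : ℤ) * 2 ^ k)
        = 2 ^ n + 2 := by
  obtain ⟨m, rfl⟩ := Nat.exists_eq_add_of_le' hn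
  have hm : Even m := by simpa [Nat.even_add] using heven
  refine ⟨?_, ?_⟩
  · rw [← diagonalChooseSum_eq_sum_range_half, three_mul_diagonalChooseSum_two,
      heven.neg_one_pow]
  · rw [sum_Icc_choose_pred_eq_mul_diagonalChooseSum, mul_left_comm,
      three_mul_diagonalChooseSum_two, hm.neg_one_pow]
    ring
end
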